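/- Let 1 ≤ t < 4/3. For every sequence γ : ℕ → ℂ such that the Hankel matrix {γ_{j+k}}_{j,k≥0} belongs to the injective tensor product ℓ¹⊗̌ℓ¹, one has ∑_{k≥0} |γ_k|^t (1+k)^{3t/2 − 1} < ∞. -/

import Mathlib

/-
Fix `N` and test the Hankel matrix against `y_k = e(2^k x)`: row `j` becomes the lacunary
polynomial `f_j(x) = ∑_{k ≤ N} γ_{j+k} e(2^k x)`, and choosing unimodular `x_j` aligned with
`f_j(x)` gives `∑_j |f_j(x)| ≤ C` for every `x`. The frequencies `2^k` form a Sidon set, so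
`‖f‖₄⁴ ≤ 2 ‖f‖₂⁴`, which forces the Khintchine inequality `‖f‖₂ ≤ √2 ‖f‖₁`. Integrating in `x`,
`∑_{j ≤ N} (∑_{k ≤ N} |γ_{j+k}|²)^{1/2} ≤ √2 C` for all `N`.

On the dyadic block `[2^i, 2^{i+1})` with `ℓ²`-norm `b_i`, the `≈ 2^{i-1}` rows below `2^i` all
contain the whole block, so `∑_i a_i ≤ 2√2 C` for `a_i = 2^i b_i`. Hölder on a block bounds its
contribution to the weighted sum by a constant times `a_i^t`, and `∑ a_i^t ≤ (∑ a_i)^t` for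
`t ≥ 1`.
-/

open Filter Finset

/-- The Hankel matrix `{γ_{j+k}}` belongs to the injective tensor product `ℓ¹ ⊗̌ ℓ¹`:
the partial bilinear sums against sequences in the unit ball of `ℓ^∞` are uniformly bounded. -/
def HankelInInj (γ : ℕ → ℂ) : Prop :=
  ∃ C : ℝ, ∀ (N : ℕ) (x y : ℕ → ℂ), (∀ j, ‖x j‖ ≤ 1) → (∀ k, ‖y k‖ ≤ 1) →
    ‖∑ j ∈ Finset.range (N + 1), ∑ k ∈ Finset.range (N + 1), γ (j + k) * x j * y k‖ ≤ C

open MeasureTheory AddCircle ComplexConjugate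

def IsSidon {ι : Type*} (n : ι → ℤ) : Prop :=
  ∀ a b c d, n a + n b = n c + n d → (a = c ∧ b = d) ∨ (a = d ∧ b = c)

lemma IsSidon.injective {ι : Type*} {n : ι → ℤ} (hn : IsSidon n) : Function.Injective n := by
  intro a b hab
  have := hn a a b b (by rw [hab])
  tauto

lemma one_add_two_pow_eq {b c d : ℕ} (h : 1 + 2 ^ b = 2 ^ c + 2 ^ d) :
    (c = 0 ∧ b = d) ∨ (d = 0 ∧ b = c) := by
  have hinj := Nat.pow_right_injective (le_refl 2)
  rcases c with _ | c <;> rcases d with _ | d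
  · exact Or.inl ⟨rfl, hinj (by simp only [pow_zero] at h ⊢; omega)⟩
  · exact Or.inl ⟨rfl, hinj (by simp only [pow_zero] at h ⊢; omega)⟩
  · exact Or.inr ⟨rfl, hinj (by simp only [pow_zero] at h ⊢; omega)⟩
  · -- the right side is even, so `2 ^ b` is odd and `b = 0`; but `2 < 2 ^ (c + 1) + 2 ^ (d + 1)`
    exfalso
    have := Nat.one_le_two_pow (n := c)
    have := Nat.one_le_two_pow (n := d)
    rcases b with _ | b <;> simp only [pow_succ] at h <;> omega

lemma two_pow_add_two_pow_eq : ∀ {a b c d : ℕ}, 2 ^ a + 2 ^ b = 2 ^ c + 2 ^ d →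
    (a = c ∧ b = d) ∨ (a = d ∧ b = c)
  | 0, _, _, _, h => by have := one_add_two_pow_eq (by simpa using h); omega
  | _ + 1, 0, _, _, h => by have := one_add_two_pow_eq (by rw [add_comm]; simpa using h); omega
  | _ + 1, _ + 1, 0, _, h => by have := one_add_two_pow_eq (by simpa using h.symm); omega
  | _ + 1, _ + 1, _ + 1, 0, h => by
    have := one_add_two_pow_eq (by rw [add_comm]; simpa using h.symm); omega
  | a + 1, b + 1, c + 1, d + 1, h => by
    have := two_pow_add_two_pow_eq (a := a) (b := b) (c := c) (d := d) (by
      simp only [pow_succ] at h; omega)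
    omega

lemma isSidon_two_pow : IsSidon fun k : ℕ => (2 : ℤ) ^ k :=
  fun _ _ _ _ h => two_pow_add_two_pow_eq (by simp only at h; exact_mod_cast h)

lemma sqrt_integral_sq_le_of_integral_pow_four_le {α : Type*} [MeasurableSpace α] {μ : Measure α}
    {q : α → ℝ} (hq : ∀ x, 0 ≤ q x) (hq1 : Integrable q μ)
    (hq2 : Integrable (fun x => q x ^ 2) μ) (hq4 : Integrable (fun x => q x ^ 4) μ)
    {A : ℝ} (hA : 0 < A) (h4 : ∫ x, q x ^ 4 ∂μ ≤ A * (∫ x, q x ^ 2 ∂μ) ^ 2) :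
    √(∫ x, q x ^ 2 ∂μ) ≤ √A * ∫ x, q x ∂μ := by
  set σ := ∫ x, q x ^ 2 ∂μ
  set B := ∫ x, q x ∂μ
  have hσ : 0 ≤ σ := integral_nonneg fun x => by positivity
  rcases hσ.eq_or_lt with h0 | hσpos
  · rw [← h0, Real.sqrt_zero]
    exact mul_nonneg (Real.sqrt_nonneg A) (integral_nonneg hq)
  set s := √A * √σ
  have hs : 0 < s := by positivity
  have hs2 : s ^ 2 = A * σ := by rw [mul_pow, Real.sq_sqrt hA.le, Real.sq_sqrt hσ]
  -- AM-GM in the form `q (q - s)² (q + 2s) ≥ 0`; the choice `s² = Aσ` balances the two terms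
  have hpt (x : α) : 3 * q x ^ 2 ≤ 2 * s * q x + q x ^ 4 / s ^ 2 := by
    have hq' := hq x
    rw [← sub_nonneg, show 2 * s * q x + q x ^ 4 / s ^ 2 - 3 * q x ^ 2 =
      q x * (q x - s) ^ 2 * (q x + 2 * s) / s ^ 2 by field_simp; ring]
    positivity
  have hint : 3 * σ ≤ 2 * s * B + (∫ x, q x ^ 4 ∂μ) / s ^ 2 := by
    calc 3 * σ = ∫ x, 3 * q x ^ 2 ∂μ := (integral_const_mul _ _).symm
      _ ≤ ∫ x, (2 * s * q x + q x ^ 4 / s ^ 2) ∂μ :=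
        integral_mono (hq2.const_mul _) ((hq1.const_mul _).add (hq4.div_const _)) hpt
      _ = 2 * s * B + (∫ x, q x ^ 4 ∂μ) / s ^ 2 := by
        rw [integral_add (hq1.const_mul _) (hq4.div_const _), integral_const_mul, integral_div]
  have h4' : (∫ x, q x ^ 4 ∂μ) / s ^ 2 ≤ σ := by
    rw [div_le_iff₀ (by positivity), hs2]
    nlinarith
  have hσB : √σ * √σ ≤ √A * B * √σ := by
    rw [Real.mul_self_sqrt hσ]
    nlinarith
  exact le_of_mul_le_mul_right hσB (Real.sqrt_pos.2 hσpos)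

section Fourier

variable {T : ℝ} {ι : Type*}

lemma integral_fourier_eq_ite [Fact (0 < T)] (n : ℤ) :
    ∫ x, fourier n x ∂(haarAddCircle (T := T)) = if n = 0 then 1 else 0 := by
  have h := congrFun (fourierCoeff_fourier (T := T) n) 0
  rw [fourierCoeff] at h
  simpa only [neg_zero, fourier_zero, one_smul, Pi.single_apply, eq_comm (a := (0 : ℤ))] using h

lemma norm_fourier_apply (n : ℤ) (x : AddCircle T) : ‖fourier n x‖ = 1 := by
  rw [fourier_apply]
  exact Circle.norm_coe _

noncomputable def trigPoly (s : Finset ι) (c : ι → ℂ) (n : ι → ℤ) (x : AddCircle T) : ℂ :=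
  ∑ i ∈ s, c i * fourier (n i) x

variable (s : Finset ι) (c : ι → ℂ) (n : ι → ℤ)

@[fun_prop]
lemma continuous_trigPoly : Continuous (trigPoly s c n : AddCircle T → ℂ) := by
  unfold trigPoly
  fun_prop

lemma Continuous.integrable_haarAddCircle [Fact (0 < T)] {E : Type*} [NormedAddCommGroup E]
    {f : AddCircle T → E} (hf : Continuous f) : Integrable f haarAddCircle :=
  hf.integrable_of_hasCompactSupport (.of_compactSpace f)

lemma integral_trigPoly [Fact (0 < T)] :
    ∫ x, trigPoly s c n x ∂(haarAddCircle (T := T)) = ∑ i ∈ s, if n i = 0 then c i else 0 := by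
  unfold trigPoly
  rw [integral_finsetSum _ fun i _ => (by fun_prop : Continuous _).integrable_haarAddCircle]
  simp_rw [integral_const_mul, integral_fourier_eq_ite, mul_ite, mul_one, mul_zero]

lemma trigPoly_mul {κ : Type*} (t : Finset κ) (d : κ → ℂ) (m : κ → ℤ) (x : AddCircle T) :
    trigPoly s c n x * trigPoly t d m x =
      trigPoly (s ×ˢ t) (fun p => c p.1 * d p.2) (fun p => n p.1 + m p.2) x := by
  simp only [trigPoly, sum_mul_sum, sum_product, fourier_add]
  exact sum_congr rfl fun _ _ => sum_congr rfl fun _ _ => by ring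

lemma conj_trigPoly (x : AddCircle T) :
    conj (trigPoly s c n x) = trigPoly s (fun i => conj (c i)) (fun i => -n i) x := by
  simp only [trigPoly, map_sum, map_mul, fourier_neg]

lemma ofReal_integral_norm_sq_trigPoly [Fact (0 < T)] :
    ((∫ x, ‖trigPoly s c n x‖ ^ 2 ∂(haarAddCircle (T := T)) : ℝ) : ℂ) =
      ∑ p ∈ s ×ˢ s, if n p.1 = n p.2 then c p.1 * conj (c p.2) else 0 := by
  have h (x : AddCircle T) : ((‖trigPoly s c n x‖ ^ 2 : ℝ) : ℂ) =
      trigPoly (s ×ˢ s) (fun p => c p.1 * conj (c p.2)) (fun p => n p.1 + -n p.2) x := by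
    rw [Complex.ofReal_pow, ← Complex.mul_conj', conj_trigPoly, trigPoly_mul]
  simp_rw [← integral_complex_ofReal, h, integral_trigPoly, add_neg_eq_zero]

lemma integral_norm_sq_trigPoly_of_injOn [Fact (0 < T)] (hn : Set.InjOn n s) :
    ∫ x, ‖trigPoly s c n x‖ ^ 2 ∂(haarAddCircle (T := T)) = ∑ i ∈ s, ‖c i‖ ^ 2 := by
  apply Complex.ofReal_injective
  rw [ofReal_integral_norm_sq_trigPoly, sum_product]
  push_cast
  refine sum_congr rfl fun i hi => ?_
  rw [sum_eq_single_of_mem i hi fun j hj hji => if_neg fun h => hji (hn hj hi h.symm),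
    if_pos rfl, Complex.mul_conj']

lemma integral_norm_sq_trigPoly_le [Fact (0 < T)] {M : ℕ}
    (hM : ∀ i ∈ s, #{j ∈ s | n j = n i} ≤ M) :
    ∫ x, ‖trigPoly s c n x‖ ^ 2 ∂(haarAddCircle (T := T)) ≤ M * ∑ i ∈ s, ‖c i‖ ^ 2 := by
  have h0 : 0 ≤ ∫ x, ‖trigPoly s c n x‖ ^ 2 ∂(haarAddCircle (T := T)) :=
    integral_nonneg fun _ => by positivity
  have hsymm : ∑ p ∈ s ×ˢ s, (if n p.1 = n p.2 then ‖c p.2‖ ^ 2 else 0) =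
      ∑ p ∈ s ×ˢ s, if n p.1 = n p.2 then ‖c p.1‖ ^ 2 else 0 := by
    rw [sum_product, sum_product, sum_comm]
    exact sum_congr rfl fun _ _ => sum_congr rfl fun _ _ => if_congr eq_comm rfl rfl
  calc ∫ x, ‖trigPoly s c n x‖ ^ 2 ∂haarAddCircle
      = ‖((∫ x, ‖trigPoly s c n x‖ ^ 2 ∂haarAddCircle : ℝ) : ℂ)‖ := by
        rw [Complex.norm_real, Real.norm_of_nonneg h0]
    _ ≤ ∑ p ∈ s ×ˢ s, if n p.1 = n p.2 then ‖c p.1‖ * ‖c p.2‖ else 0 := by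
        rw [ofReal_integral_norm_sq_trigPoly]
        refine (norm_sum_le _ _).trans (sum_le_sum fun p _ => ?_)
        split_ifs <;> simp
    _ ≤ ∑ p ∈ s ×ˢ s, ((if n p.1 = n p.2 then ‖c p.1‖ ^ 2 else 0) +
          (if n p.1 = n p.2 then ‖c p.2‖ ^ 2 else 0)) / 2 := by
        refine sum_le_sum fun p _ => ?_
        split_ifs
        · nlinarith [sq_nonneg (‖c p.1‖ - ‖c p.2‖)]
        · simp
    _ = ∑ i ∈ s, #{j ∈ s | n j = n i} * ‖c i‖ ^ 2 := by
        rw [← sum_div, sum_add_distrib, hsymm, add_self_div_two, sum_product]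
        refine sum_congr rfl fun i _ => ?_
        simp only [← sum_filter, sum_const, nsmul_eq_mul, eq_comm (a := n i)]
    _ ≤ M * ∑ i ∈ s, ‖c i‖ ^ 2 := by
        rw [mul_sum]
        gcongr with i hi
        exact_mod_cast hM i hi

lemma integral_norm_pow_four_trigPoly_le [Fact (0 < T)] (hn : IsSidon n) :
    ∫ x, ‖trigPoly s c n x‖ ^ 4 ∂(haarAddCircle (T := T)) ≤ 2 * (∑ i ∈ s, ‖c i‖ ^ 2) ^ 2 := by
  have hsq (x : AddCircle T) : ‖trigPoly s c n x‖ ^ 4 =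
      ‖trigPoly (s ×ˢ s) (fun p => c p.1 * c p.2) (fun p => n p.1 + n p.2) x‖ ^ 2 := by
    rw [← trigPoly_mul, norm_mul]
    ring
  have hmult : ∀ p ∈ s ×ˢ s, #{q ∈ s ×ˢ s | n q.1 + n q.2 = n p.1 + n p.2} ≤ 2 := by
    classical
    intro p _
    calc _ ≤ #{p, p.swap} := card_le_card fun q hq => by
            rcases hn _ _ _ _ (mem_filter.1 hq).2 with ⟨h1, h2⟩ | ⟨h1, h2⟩
            · rw [show q = p from Prod.ext h1 h2]
              exact mem_insert_self _ _
            · rw [show q = p.swap from Prod.ext h1 h2]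
              exact mem_insert_of_mem (mem_singleton_self _)
      _ ≤ 2 := card_le_two
  simp_rw [hsq]
  refine (integral_norm_sq_trigPoly_le _ _ _ hmult).trans_eq ?_
  rw [sq (∑ i ∈ s, _), sum_mul_sum, sum_product]
  simp [mul_pow]

lemma sqrt_sum_norm_sq_le_integral_norm_trigPoly [Fact (0 < T)] (hn : IsSidon n) :
    √(∑ i ∈ s, ‖c i‖ ^ 2) ≤ √2 * ∫ x, ‖trigPoly s c n x‖ ∂(haarAddCircle (T := T)) := by
  have hf := (continuous_trigPoly s c n (T := T)).norm
  have hL2 := integral_norm_sq_trigPoly_of_injOn s c n hn.injective.injOn (T := T)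
  rw [← hL2]
  refine sqrt_integral_sq_le_of_integral_pow_four_le (fun _ => norm_nonneg _)
    hf.integrable_haarAddCircle (hf.pow 2).integrable_haarAddCircle
    (hf.pow 4).integrable_haarAddCircle two_pos ?_
  rw [hL2]
  exact integral_norm_pow_four_trigPoly_le s c n hn

end Fourier

lemma sum_norm_sum_mul_le {ι κ : Type*} (s : Finset ι) (t : Finset κ) {a : ι → κ → ℂ} {C : ℝ}
    (hC : ∀ (x : ι → ℂ) (y : κ → ℂ), (∀ j, ‖x j‖ ≤ 1) → (∀ k, ‖y k‖ ≤ 1) →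
      ‖∑ j ∈ s, ∑ k ∈ t, a j k * x j * y k‖ ≤ C)
    {y : κ → ℂ} (hy : ∀ k, ‖y k‖ ≤ 1) :
    ∑ j ∈ s, ‖∑ k ∈ t, a j k * y k‖ ≤ C := by
  choose x hx1 hx using fun j => Complex.exists_norm_eq_mul_self (∑ k ∈ t, a j k * y k)
  have hsum : ∑ j ∈ s, ∑ k ∈ t, a j k * x j * y k =
      ((∑ j ∈ s, ‖∑ k ∈ t, a j k * y k‖ : ℝ) : ℂ) := by
    push_cast
    simp_rw [hx, mul_sum]
    exact sum_congr rfl fun _ _ => sum_congr rfl fun _ _ => by ring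
  have := hC x y (fun j => (hx1 j).le) hy
  rwa [hsum, Complex.norm_real, Real.norm_of_nonneg (sum_nonneg fun _ _ => norm_nonneg _)] at this

theorem HankelInInj.exists_sum_sqrt_le {γ : ℕ → ℂ} (hγ : HankelInInj γ) :
    ∃ K, ∀ N, ∑ j ∈ range (N + 1), √(∑ k ∈ range (N + 1), ‖γ (j + k)‖ ^ 2) ≤ K := by
  obtain ⟨C, hC⟩ := hγ
  refine ⟨√2 * C, fun N => ?_⟩
  set f : ℕ → UnitAddCircle → ℂ := fun j =>
    trigPoly (range (N + 1)) (fun k => γ (j + k)) fun k => (2 : ℤ) ^ k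
  have hf (j : ℕ) : Continuous fun x => ‖f j x‖ := (continuous_trigPoly _ _ _).norm
  have hrows (x : UnitAddCircle) : ∑ j ∈ range (N + 1), ‖f j x‖ ≤ C :=
    sum_norm_sum_mul_le _ _ (hC N) fun k => (norm_fourier_apply _ x).le
  calc ∑ j ∈ range (N + 1), √(∑ k ∈ range (N + 1), ‖γ (j + k)‖ ^ 2)
      ≤ ∑ j ∈ range (N + 1), √2 * ∫ x, ‖f j x‖ ∂haarAddCircle :=
        sum_le_sum fun j _ => sqrt_sum_norm_sq_le_integral_norm_trigPoly _ _ _ isSidon_two_pow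
    _ = √2 * ∫ x, ∑ j ∈ range (N + 1), ‖f j x‖ ∂haarAddCircle := by
        rw [← mul_sum, integral_finsetSum _ fun j _ => (hf j).integrable_haarAddCircle]
    _ ≤ √2 * C := by
        gcongr
        calc ∫ x, ∑ j ∈ range (N + 1), ‖f j x‖ ∂haarAddCircle ≤ ∫ _, C ∂haarAddCircle :=
              integral_mono (continuous_finsetSum _ fun j _ => hf j).integrable_haarAddCircle
                (integrable_const C) hrows
          _ = C := by simp

lemma Finset.sum_rpow_le_rpow_sum {ι : Type*} (s : Finset ι) {a : ι → ℝ} (ha : ∀ i ∈ s, 0 ≤ a i)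
    {t : ℝ} (ht : 1 ≤ t) : ∑ i ∈ s, a i ^ t ≤ (∑ i ∈ s, a i) ^ t := by
  have hS : 0 ≤ ∑ i ∈ s, a i := sum_nonneg ha
  have hpow {x : ℝ} (hx : 0 ≤ x) : x ^ t = x * x ^ (t - 1) := by
    rw [← Real.rpow_one_add' hx (by linarith), add_sub_cancel]
  calc ∑ i ∈ s, a i ^ t ≤ ∑ i ∈ s, a i * (∑ j ∈ s, a j) ^ (t - 1) := by
        refine sum_le_sum fun i hi => ?_
        rw [hpow (ha i hi)]
        exact mul_le_mul_of_nonneg_left (Real.rpow_le_rpow (ha i hi) (single_le_sum ha hi)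
          (by linarith)) (ha i hi)
    _ = (∑ i ∈ s, a i) ^ t := by rw [← sum_mul, ← hpow hS]

lemma Finset.sum_rpow_le_card_rpow_mul_sqrt_sum_sq {ι : Type*} (s : Finset ι) {g : ι → ℝ}
    (hg : ∀ i ∈ s, 0 ≤ g i) {t : ℝ} (ht0 : 0 < t) (ht2 : t ≤ 2) :
    ∑ i ∈ s, g i ^ t ≤ (#s : ℝ) ^ (1 - t / 2) * √(∑ i ∈ s, g i ^ 2) ^ t := by
  have hp : 1 ≤ 2 / t := by rw [le_div_iff₀ ht0]; linarith
  have hgt : ∀ i ∈ s, 0 ≤ g i ^ t := fun i hi => Real.rpow_nonneg (hg i hi) t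
  have h := Real.rpow_sum_le_const_mul_sum_rpow_of_nonneg s hp hgt
  have hsq : ∀ i ∈ s, (g i ^ t) ^ (2 / t) = g i ^ 2 := fun i hi => by
    rw [← Real.rpow_mul (hg i hi), mul_div_cancel₀ _ ht0.ne', Real.rpow_two]
  rw [sum_congr rfl hsq] at h
  calc ∑ i ∈ s, g i ^ t = ((∑ i ∈ s, g i ^ t) ^ (2 / t)) ^ (t / 2) := by
        rw [← Real.rpow_mul (sum_nonneg hgt), show 2 / t * (t / 2) = 1 by field_simp,
          Real.rpow_one]
    _ ≤ ((#s : ℝ) ^ (2 / t - 1) * ∑ i ∈ s, g i ^ 2) ^ (t / 2) := by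
        gcongr
        exact Real.rpow_nonneg (sum_nonneg hgt) _
    _ = (#s : ℝ) ^ (1 - t / 2) * √(∑ i ∈ s, g i ^ 2) ^ t := by
        rw [Real.mul_rpow (by positivity) (sum_nonneg fun i _ => sq_nonneg _),
          ← Real.rpow_mul (by positivity), Real.sqrt_eq_rpow, ← Real.rpow_mul
          (sum_nonneg fun i _ => sq_nonneg _)]
        congr 2 <;> field_simp

lemma Finset.sum_range_sum_Ico_of_monotone {M : Type*} [AddCommMonoid M] (f : ℕ → M)
    {u : ℕ → ℕ} (hu : Monotone u) (I : ℕ) :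
    ∑ i ∈ range I, ∑ m ∈ Ico (u i) (u (i + 1)), f m = ∑ m ∈ Ico (u 0) (u I), f m := by
  induction I with
  | zero => simp
  | succ I ih => rw [sum_range_succ, ih, sum_Ico_consecutive _ (hu I.zero_le) (hu I.le_succ)]

section Dyadic

variable {g : ℕ → ℝ} {K : ℝ}

lemma sum_Ico_sq_le_sum_range_sq {a b j N : ℕ} (hja : j ≤ a) (hb : b ≤ j + (N + 1)) :
    ∑ m ∈ Ico a b, g m ^ 2 ≤ ∑ k ∈ range (N + 1), g (j + k) ^ 2 := by
  calc ∑ m ∈ Ico a b, g m ^ 2 ≤ ∑ m ∈ Ico j (j + (N + 1)), g m ^ 2 :=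
        sum_le_sum_of_subset_of_nonneg (Ico_subset_Ico hja hb) fun _ _ _ => sq_nonneg _
    _ = ∑ k ∈ range (N + 1), g (j + k) ^ 2 := by rw [sum_Ico_eq_sum_range, add_tsub_cancel_left]

lemma sum_two_pow_mul_sqrt_le
    (hK : ∀ N, ∑ j ∈ range (N + 1), √(∑ k ∈ range (N + 1), g (j + k) ^ 2) ≤ K) (I : ℕ) :
    ∑ i ∈ range I, 2 ^ i * √(∑ m ∈ Ico (2 ^ i) (2 ^ (i + 1)), g m ^ 2) ≤ 2 * K := by
  obtain ⟨N, hN⟩ : ∃ N, N + 1 = 2 ^ I := ⟨2 ^ I - 1, Nat.sub_add_cancel Nat.one_le_two_pow⟩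
  set row := fun j => √(∑ k ∈ range (N + 1), g (j + k) ^ 2)
  -- the at least `2^i / 2` rows `j ∈ [2^i / 2, 2^i)` all see the whole block `[2^i, 2^(i+1))`
  have hblock : ∀ i ∈ range I, 2 ^ i * √(∑ m ∈ Ico (2 ^ i) (2 ^ (i + 1)), g m ^ 2) ≤
      2 * ∑ j ∈ Ico (2 ^ i / 2) (2 ^ (i + 1) / 2), row j := by
    intro i hi
    set b := √(∑ m ∈ Ico (2 ^ i) (2 ^ (i + 1)), g m ^ 2)
    set J := Ico (2 ^ i / 2) (2 ^ (i + 1) / 2)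
    have hpow : 2 ^ (i + 1) = 2 * 2 ^ i := pow_succ' 2 i
    have hiI : 2 ^ (i + 1) ≤ N + 1 := hN ▸ Nat.pow_le_pow_right two_pos (mem_range.1 hi)
    have hcard : (2 : ℝ) ^ i ≤ 2 * #J := by
      rw [Nat.card_Ico]
      exact_mod_cast (by omega : 2 ^ i ≤ 2 * (2 ^ (i + 1) / 2 - 2 ^ i / 2))
    have hrow : ∀ j ∈ J, b ≤ row j := fun j hj => by
      have := mem_Ico.1 hj
      exact Real.sqrt_le_sqrt (sum_Ico_sq_le_sum_range_sq (by omega) (by omega))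
    calc 2 ^ i * b ≤ 2 * (#J • b) := by
          rw [nsmul_eq_mul, ← mul_assoc]
          gcongr
      _ ≤ 2 * ∑ j ∈ J, row j := by
          gcongr
          exact card_nsmul_le_sum _ _ _ hrow
  have hu : Monotone fun i => 2 ^ i / 2 := fun a b hab =>
    Nat.div_le_div_right (Nat.pow_le_pow_right two_pos hab)
  calc ∑ i ∈ range I, 2 ^ i * √(∑ m ∈ Ico (2 ^ i) (2 ^ (i + 1)), g m ^ 2)
      ≤ ∑ i ∈ range I, 2 * ∑ j ∈ Ico (2 ^ i / 2) (2 ^ (i + 1) / 2), row j := sum_le_sum hblock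
    _ = 2 * ∑ j ∈ Ico (2 ^ 0 / 2) (2 ^ I / 2), row j := by
        rw [← mul_sum, sum_range_sum_Ico_of_monotone row hu]
    _ ≤ 2 * ∑ j ∈ range (N + 1), row j := by
        gcongr
        intro j hj
        have := mem_Ico.1 hj
        exact mem_range.2 (by omega)
    _ ≤ 2 * K := by gcongr; exact hK N

lemma sum_Ico_two_pow_rpow_mul_le (hg : ∀ m, 0 ≤ g m) {t : ℝ} (ht0 : 2 / 3 ≤ t) (ht2 : t ≤ 2)
    (i : ℕ) :
    ∑ m ∈ Ico (2 ^ i) (2 ^ (i + 1)), g m ^ t * (1 + (m : ℝ)) ^ (3 * t / 2 - 1) ≤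
      2 ^ (3 * t / 2 - 1) * (2 ^ i * √(∑ m ∈ Ico (2 ^ i) (2 ^ (i + 1)), g m ^ 2)) ^ t := by
  set e := 3 * t / 2 - 1
  have he : 0 ≤ e := by simp only [e]; linarith
  set B := ∑ m ∈ Ico (2 ^ i) (2 ^ (i + 1)), g m ^ 2
  have hcard : (#(Ico (2 ^ i) (2 ^ (i + 1))) : ℝ) = 2 ^ i := by
    rw [Nat.card_Ico, pow_succ, Nat.mul_two, Nat.add_sub_cancel]
    push_cast
    rfl
  calc ∑ m ∈ Ico (2 ^ i) (2 ^ (i + 1)), g m ^ t * (1 + (m : ℝ)) ^ e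
      ≤ ∑ m ∈ Ico (2 ^ i) (2 ^ (i + 1)), g m ^ t * ((2 : ℝ) ^ (i + 1)) ^ e := by
        refine sum_le_sum fun m hm => ?_
        have hm' : (1 + (m : ℝ)) ≤ (2 : ℝ) ^ (i + 1) := by
          exact_mod_cast (by have := mem_Ico.1 hm; omega : 1 + m ≤ 2 ^ (i + 1))
        gcongr
        exact Real.rpow_nonneg (hg m) t
    _ = ((2 : ℝ) ^ (i + 1)) ^ e * ∑ m ∈ Ico (2 ^ i) (2 ^ (i + 1)), g m ^ t := by
        rw [← sum_mul, mul_comm]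
    _ ≤ ((2 : ℝ) ^ (i + 1)) ^ e * (((2 : ℝ) ^ i) ^ (1 - t / 2) * √B ^ t) := by
        gcongr
        rw [← hcard]
        exact sum_rpow_le_card_rpow_mul_sqrt_sum_sq _ (fun m _ => hg m) (by linarith) ht2
    _ = 2 ^ e * (2 ^ i * √B) ^ t := by
        have h2i : (0 : ℝ) < 2 ^ i := by positivity
        rw [pow_succ', Real.mul_rpow zero_le_two h2i.le, Real.mul_rpow h2i.le (Real.sqrt_nonneg _),
          mul_assoc, ← mul_assoc (((2 : ℝ) ^ i) ^ e), ← Real.rpow_add h2i]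
        simp only [e]
        ring_nf

theorem summable_rpow_mul_of_sum_sqrt_le (hg : ∀ m, 0 ≤ g m) {t : ℝ} (ht1 : 1 ≤ t)
    (ht2 : t ≤ 2)
    (hK : ∀ N, ∑ j ∈ range (N + 1), √(∑ k ∈ range (N + 1), g (j + k) ^ 2) ≤ K) :
    Summable fun m : ℕ => g m ^ t * (1 + (m : ℝ)) ^ (3 * t / 2 - 1) := by
  set P := fun m : ℕ => g m ^ t * (1 + (m : ℝ)) ^ (3 * t / 2 - 1)
  set a := fun i : ℕ => 2 ^ i * √(∑ m ∈ Ico (2 ^ i) (2 ^ (i + 1)), g m ^ 2)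
  have hP (m : ℕ) : 0 ≤ P m := mul_nonneg (Real.rpow_nonneg (hg m) t) (by positivity)
  have ha (i : ℕ) : 0 ≤ a i := by positivity
  refine summable_of_sum_range_le hP (c := P 0 + 2 ^ (3 * t / 2 - 1) * (2 * K) ^ t) fun n => ?_
  calc ∑ m ∈ range n, P m ≤ ∑ m ∈ range (2 ^ n), P m :=
        sum_le_sum_of_subset_of_nonneg (range_subset_range.2 n.lt_two_pow_self.le)
          fun m _ _ => hP m
    _ = P 0 + ∑ i ∈ range n, ∑ m ∈ Ico (2 ^ i) (2 ^ (i + 1)), P m := by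
        rw [sum_range_sum_Ico_of_monotone P (pow_right_mono₀ one_le_two), range_eq_Ico,
          ← sum_Ico_consecutive _ zero_le_one Nat.one_le_two_pow, pow_zero,
          Nat.Ico_zero_eq_range, sum_range_one]
    _ ≤ P 0 + ∑ i ∈ range n, 2 ^ (3 * t / 2 - 1) * a i ^ t := by
        gcongr with i
        exact sum_Ico_two_pow_rpow_mul_le hg (by linarith) ht2 i
    _ ≤ P 0 + 2 ^ (3 * t / 2 - 1) * (2 * K) ^ t := by
        rw [← mul_sum]
        gcongr
        refine (sum_rpow_le_rpow_sum _ (fun i _ => ha i) ht1).trans ?_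
        exact Real.rpow_le_rpow (sum_nonneg fun i _ => ha i) (sum_two_pow_mul_sqrt_le hK n)
          (by linarith)

end Dyadic

theorem hankel_inj_weighted_summable (t : ℝ) (ht1 : 1 ≤ t) (ht2 : t < 4 / 3)
    (γ : ℕ → ℂ) (hγ : HankelInInj γ) :
    Summable fun k : ℕ => ‖γ k‖ ^ t * (1 + (k : ℝ)) ^ (3 * t / 2 - 1) := by
  obtain ⟨K, hK⟩ := hγ.exists_sum_sqrt_le
  exact summable_rpow_mul_of_sum_sqrt_le (fun m => norm_nonneg (γ m)) ht1 (by linarith) hK
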